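/- Let H be a real Hilbert space, N ⊆ H a closed subspace, ζ* ∈ N^⊥, C > ‖ζ*‖, and K = {v ∈ ζ* + N : ‖v‖ ≤ C}. Suppose Q : H → ℝ is a continuous linear functional and ψ ∈ N satisfies ‖ψ‖² = C² − ‖ζ*‖² and |Q(ψ)| = sup{ |Q(η)| : η ∈ N, ‖η‖ ≤ ‖ψ‖ }. Then sup_{v ∈ K} |Q(v) − Q(ζ*)| = inf_{l ∈ ℝ} sup_{v ∈ K} |Q(v) − l|; that is, Q(ζ*) is an optimal (Chebyshev-center) value for the quantity of interest Q over K. -/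
import Mathlib


open scoped RealInnerProductSpace

/-- Q(ζ*) is an optimal (Chebyshev-center) value for the quantity of
interest Q over K. -/
theorem stmt_3 {H : Type*} [NormedAddCommGroup H] [InnerProductSpace ℝ H]
    [CompleteSpace H]
    (N : Submodule ℝ H) (hN : IsClosed (N : Set H))
    (ζ : H) (hζ : ∀ η ∈ N, ⟪ζ, η⟫ = 0)
    (C : ℝ) (hC : ‖ζ‖ < C)
    (Q : H →L[ℝ] ℝ)
    (ψ : H) (hψN : ψ ∈ N) (hψnorm : ‖ψ‖ ^ 2 = C ^ 2 - ‖ζ‖ ^ 2)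
    (hψmax : |Q ψ| = sSup {r : ℝ | ∃ η ∈ N, ‖η‖ ≤ ‖ψ‖ ∧ r = |Q η|}) :
    sSup ((fun v => |Q v - Q ζ|) '' {v : H | (∃ η ∈ N, v = ζ + η) ∧ ‖v‖ ≤ C}) =
      ⨅ l : ℝ, sSup ((fun v => |Q v - l|) '' {v : H | (∃ η ∈ N, v = ζ + η) ∧ ‖v‖ ≤ C}) := by
  set K : Set H := {v : H | (∃ η ∈ N, v = ζ + η) ∧ ‖v‖ ≤ C} with hK
  have hC0 : (0:ℝ) ≤ C := le_trans (norm_nonneg ζ) hC.le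
  have hnorm : ∀ η ∈ N, ‖ζ + η‖ ^ 2 = ‖ζ‖ ^ 2 + ‖η‖ ^ 2 := by
    intro η hη
    rw [norm_add_sq_real, hζ η hη]; ring
  have hiff : ∀ η ∈ N, (‖ζ + η‖ ≤ C ↔ ‖η‖ ≤ ‖ψ‖) := by
    intro η hη
    rw [← pow_le_pow_iff_left₀ (norm_nonneg _) hC0 two_ne_zero,
        ← pow_le_pow_iff_left₀ (norm_nonneg η) (norm_nonneg ψ) two_ne_zero,
        hnorm η hη, hψnorm]
    constructor <;> intro h <;> linarith
  have hmem : ∀ η ∈ N, ‖η‖ ≤ ‖ψ‖ → ζ + η ∈ K := by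
    intro η hη h
    exact ⟨⟨η, hη, rfl⟩, (hiff η hη).2 h⟩
  have hζK : ζ ∈ K := by
    refine ⟨⟨0, N.zero_mem, by simp⟩, hC.le⟩
  have hSeq : (fun v => |Q v - Q ζ|) '' K = {r : ℝ | ∃ η ∈ N, ‖η‖ ≤ ‖ψ‖ ∧ r = |Q η|} := by
    ext r
    constructor
    · rintro ⟨v, ⟨⟨η, hη, rfl⟩, hv⟩, rfl⟩
      exact ⟨η, hη, (hiff η hη).1 hv, by simp⟩
    · rintro ⟨η, hη, hle, rfl⟩
      exact ⟨ζ + η, hmem η hη hle, by simp⟩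
  have hbdd : ∀ l : ℝ, BddAbove ((fun v => |Q v - l|) '' K) := by
    intro l
    refine ⟨‖Q‖ * C + |l|, ?_⟩
    rintro r ⟨v, ⟨-, hv⟩, rfl⟩
    have h1 : |Q v - l| ≤ |Q v| + |l| := by
      rw [sub_eq_add_neg]
      exact (abs_add_le _ _).trans (by rw [abs_neg])
    have h2 : |Q v| ≤ ‖Q‖ * ‖v‖ := Q.le_opNorm v
    have h3 : ‖Q‖ * ‖v‖ ≤ ‖Q‖ * C := by
      exact mul_le_mul_of_nonneg_left hv (norm_nonneg Q)
    linarith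
  have hlow : ∀ l : ℝ, |Q ψ| ≤ sSup ((fun v => |Q v - l|) '' K) := by
    intro l
    have hp : ζ + ψ ∈ K := hmem ψ hψN le_rfl
    have hm : ζ + -ψ ∈ K := hmem (-ψ) (N.neg_mem hψN) (by rw [norm_neg])
    have h1 : |Q (ζ + ψ) - l| ≤ sSup ((fun v => |Q v - l|) '' K) :=
      le_csSup (hbdd l) ⟨ζ + ψ, hp, rfl⟩
    have h2 : |Q (ζ + -ψ) - l| ≤ sSup ((fun v => |Q v - l|) '' K) :=
      le_csSup (hbdd l) ⟨ζ + -ψ, hm, rfl⟩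
    have e : (Q (ζ + ψ) - l) - (Q (ζ + -ψ) - l) = 2 * Q ψ := by
      simp [map_add, map_neg]; ring
    have h3 : (2:ℝ) * |Q ψ| ≤ |Q (ζ + ψ) - l| + |Q (ζ + -ψ) - l| := by
      have := abs_sub (Q (ζ + ψ) - l) (Q (ζ + -ψ) - l)
      rw [e, abs_mul, abs_two] at this
      linarith
    linarith
  have hsup0 : ∀ l : ℝ, (0:ℝ) ≤ sSup ((fun v => |Q v - l|) '' K) := by
    intro l
    exact le_trans (abs_nonneg _) (le_csSup (hbdd l) ⟨ζ, hζK, rfl⟩)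
  have hLHS : sSup ((fun v => |Q v - Q ζ|) '' K) = |Q ψ| := by
    rw [hSeq, ← hψmax]
  rw [hLHS]
  apply le_antisymm
  · exact le_ciInf hlow
  · have : ⨅ l : ℝ, sSup ((fun v => |Q v - l|) '' K) ≤
        sSup ((fun v => |Q v - Q ζ|) '' K) := by
      exact ciInf_le ⟨0, by rintro x ⟨l, rfl⟩; exact hsup0 l⟩ (Q ζ)
    rwa [hLHS] at this
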